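/- Let x be in the support of the common distribution of i.i.d. random vectors X_1, X_2, ... in R^p, and let X_{(1),n} be the nearest neighbor of x among X_1,...,X_n. Let μ: R^p → R be a bounded continuous function. Then E[μ(X_{(1),n})] converges to μ(x) as n → ∞. -/

import Mathlib

open MeasureTheory ProbabilityTheory Filter Topology

/-!
Fix `ε > 0`. Since `x` is in the support, each `X i` avoids the ball `B(x, ε)` with the same
probability `r < 1`, so by independence all of `X 0, …, X (n-1)` avoid it with probability `rⁿ`,
and almost surely some `X i` lies in the ball. Along countably many `ε`, this shows that almost
surely `x` is a limit point of the sample, so the nearest neighbour converges to `x`; dominated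
convergence for the bounded continuous `μf` concludes.
-/

theorem measure_iInter_preimage_eq_zero_of_iIndepFun {Ω β : Type*} [MeasurableSpace Ω]
    [MeasurableSpace β] {μ : Measure Ω} [IsProbabilityMeasure μ] {X : ℕ → Ω → β}
    (hindep : iIndepFun X μ) (hid : ∀ i, IdentDistrib (X i) (X 0) μ μ)
    {B : Set β} (hB : MeasurableSet B) (hlt : μ (X 0 ⁻¹' B) < 1) :
    μ (⋂ i, X i ⁻¹' B) = 0 := by
  have hbound : ∀ n : ℕ, μ (⋂ i, X i ⁻¹' B) ≤ μ (X 0 ⁻¹' B) ^ n := fun n =>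
    calc μ (⋂ i, X i ⁻¹' B) ≤ μ (⋂ i ∈ Finset.range n, X i ⁻¹' B) :=
          measure_mono fun ω hω => Set.mem_iInter₂.2 fun i _ => Set.mem_iInter.1 hω i
      _ = ∏ i ∈ Finset.range n, μ (X i ⁻¹' B) :=
          hindep.measure_inter_preimage_eq_mul (Finset.range n) (sets := fun _ => B)
            fun _ _ => hB
      _ = μ (X 0 ⁻¹' B) ^ n := by
          simp only [fun i => (hid i).measure_mem_eq hB, Finset.prod_const, Finset.card_range]
  exact le_zero_iff.mp
    (ge_of_tendsto' (ENNReal.tendsto_pow_atTop_nhds_zero_of_lt_one hlt) hbound)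

theorem ae_exists_dist_lt_of_iIndepFun {Ω α : Type*} [MeasurableSpace Ω] [PseudoMetricSpace α]
    [MeasurableSpace α] [OpensMeasurableSpace α] {μ : Measure Ω} [IsProbabilityMeasure μ]
    {X : ℕ → Ω → α} (hX : ∀ i, Measurable (X i)) (hindep : iIndepFun X μ)
    (hid : ∀ i, IdentDistrib (X i) (X 0) μ μ) {x : α}
    (hsupp : ∀ ε > (0 : ℝ), 0 < μ {ω | dist (X 0 ω) x < ε}) :
    ∀ᵐ ω ∂μ, ∀ ε > (0 : ℝ), ∃ i, dist (X i ω) x < ε := by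
  have hfar : ∀ ε > (0 : ℝ), ∀ᵐ ω ∂μ, ∃ i, dist (X i ω) x < ε := by
    intro ε hε
    set B : Set α := {y | ε ≤ dist y x}
    have hB : MeasurableSet B :=
      (isClosed_le continuous_const (continuous_id.dist continuous_const)).measurableSet
    have hcompl : (X 0 ⁻¹' B)ᶜ = {ω | dist (X 0 ω) x < ε} := by
      ext ω; simp [B]
    have hlt : μ (X 0 ⁻¹' B) < 1 := by
      rw [← prob_add_prob_compl (μ := μ) (hX 0 hB)]
      exact ENNReal.lt_add_right (measure_ne_top _ _) (hcompl ▸ hsupp ε hε).ne'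
    filter_upwards [measure_eq_zero_iff_ae_notMem.mp
      (measure_iInter_preimage_eq_zero_of_iIndepFun hindep hid hB hlt)] with ω hω
    simpa [B] using hω
  have hall : ∀ᵐ ω ∂μ, ∀ k : ℕ, ∃ i, dist (X i ω) x < 1 / ((k : ℝ) + 1) :=
    ae_all_iff.2 fun k => hfar _ Nat.one_div_pos_of_nat
  filter_upwards [hall] with ω hω ε hε
  obtain ⟨k, hk⟩ := exists_nat_one_div_lt hε
  obtain ⟨i, hi⟩ := hω k
  exact ⟨i, hi.trans hk⟩

theorem tendsto_of_dist_le_of_exists_dist_lt {α : Type*} [PseudoMetricSpace α]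
    {y z : ℕ → α} {x : α} (hz : ∀ n, ∀ i < n, dist (z n) x ≤ dist (y i) x)
    (hy : ∀ ε > 0, ∃ i, dist (y i) x < ε) : Tendsto z atTop (𝓝 x) := by
  refine Metric.tendsto_atTop.2 fun ε hε => ?_
  obtain ⟨i, hi⟩ := hy ε hε
  exact ⟨i + 1, fun n hn => (hz n i (Nat.lt_of_succ_le hn)).trans_lt hi⟩

/-- If `x` is in the support of the common law of i.i.d. random vectors
`X 0, X 1, ...` in `ℝ^p`, `NN n` is the nearest neighbor of `x` among the first `n` points,
and `μf` is bounded and continuous, then `E[μf (NN n)] → μf x` as `n → ∞`. -/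
theorem stmt1 {p : ℕ} {Ω : Type*} [MeasureSpace Ω] [IsProbabilityMeasure (ℙ : Measure Ω)]
    (X : ℕ → Ω → EuclideanSpace ℝ (Fin p)) (hXmeas : ∀ j, Measurable (X j))
    (hindep : iIndepFun X ℙ)
    (hid : ∀ j, IdentDistrib (X j) (X 0) ℙ ℙ)
    (x : EuclideanSpace ℝ (Fin p))
    (hsupp : ∀ ε > (0 : ℝ), 0 < ℙ {ω | dist (X 0 ω) x < ε})
    (NN : ℕ → Ω → EuclideanSpace ℝ (Fin p)) (hNNmeas : ∀ n, Measurable (NN n))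
    (hNN : ∀ n, 1 ≤ n → ∀ ω, ∃ j < n, NN n ω = X j ω ∧
      ∀ i < n, dist (NN n ω) x ≤ dist (X i ω) x)
    (μf : EuclideanSpace ℝ (Fin p) → ℝ) (hμc : Continuous μf)
    (hμb : ∃ C, ∀ y, |μf y| ≤ C) :
    Tendsto (fun n => ∫ ω, μf (NN n ω) ∂ℙ) atTop (nhds (μf x)) := by
  have hNN_le : ∀ ω n, ∀ i < n, dist (NN n ω) x ≤ dist (X i ω) x := fun ω n i hi =>
    (hNN n (Nat.one_le_of_lt hi) ω).choose_spec.2.2 i hi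
  have hconv : ∀ᵐ ω ∂(ℙ : Measure Ω), Tendsto (fun n => NN n ω) atTop (𝓝 x) :=
    (ae_exists_dist_lt_of_iIndepFun hXmeas hindep hid hsupp).mono fun ω hω =>
      tendsto_of_dist_le_of_exists_dist_lt (hNN_le ω) hω
  obtain ⟨C, hC⟩ := hμb
  simpa using tendsto_integral_filter_of_norm_le_const (f := fun _ => μf x)
    (Eventually.of_forall fun n => (hμc.measurable.comp (hNNmeas n)).aestronglyMeasurable)
    ⟨C, Eventually.of_forall fun n => ae_of_all _ fun ω => hC (NN n ω)⟩
    (hconv.mono fun ω hω => (hμc.tendsto x).comp hω)
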